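/- Fix ½ ≤ γ < ν ≤ 1 and 0 < μ < min[ν, ν²/γ − 3ν + 2]. Let v(r,t) = ((1−t)_+ + r^{2ν})^{ν/(2γ)}/r^ν + (R/r)^ν + ((ν+1)/(ν²−μ²)) r^μ. Then on the region Ω_γ = {(r,t) ∈ [R,1]×[0,T) : 1−t ≤ r^{2γ} ≤ 1} one has (∂_t − Δ_ν) v ≥ r^{μ−2}, where Δ_ν = ∂_r² + (1/r)∂_r − ν²/r². -/

import Mathlib

/-!
Substituting `v = x^{-ν} Φ(x^{2ν})` conjugates the Bessel operator to a pure second derivative: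
`Δ_ν v = 4ν² r^{3ν-2} Φ''(r^{2ν})`. For `v = superSol` the profile is
`Φ(y) = ((1-t)₊ + y)^{ν/(2γ)} + R^ν + c y^{(μ+ν)/(2ν)}`; its first summand is concave since
`ν/(2γ) ≤ 1`, and the last one gives `c (μ² - ν²) r^{μ-2} = -(ν+1) r^{μ-2}`.
In `t`, `v` is Lipschitz with constant `ν/(2γ) · r^{ν²/γ - 3ν} ≤ ν r^{μ-2}`, which bounds `∂_t v`
from below everywhere, including the kink `t = 1` where `deriv` takes the junk value `0`.
-/

/-- The supersolution `v(r,t) = ((1−t)₊ + r^{2ν})^{ν/(2γ)}/r^ν + (R/r)^ν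
+ ((ν+1)/(ν²−μ²)) r^μ` of Lemma 5.2. -/
noncomputable def superSol (ν γ μ R r t : ℝ) : ℝ :=
  (max (1 - t) 0 + r ^ (2 * ν)) ^ (ν / (2 * γ)) / r ^ ν
    + (R / r) ^ ν + (ν + 1) / (ν ^ 2 - μ ^ 2) * r ^ μ

open Real Filter Topology

noncomputable def besselLap (ν : ℝ) (f : ℝ → ℝ) (r : ℝ) : ℝ :=
  deriv (deriv f) r + r⁻¹ * deriv f r - ν ^ 2 / r ^ 2 * f r

lemma besselLap_congr {ν r : ℝ} {f g : ℝ → ℝ} (h : f =ᶠ[𝓝 r] g) :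
    besselLap ν f r = besselLap ν g r := by
  simp only [besselLap, h.deriv.deriv_eq, h.deriv_eq, h.eq_of_nhds]

lemma besselLap_rpow_neg_mul_comp {ν r b : ℝ} {φ φ' : ℝ → ℝ} (hr : 0 < r)
    (hφ : ∀ y, 0 < y → HasDerivAt φ (φ' y) y) (hφ' : HasDerivAt φ' b (r ^ (2 * ν))) :
    besselLap ν (fun x => x ^ (-ν) * φ (x ^ (2 * ν))) r = 4 * ν ^ 2 * r ^ (3 * ν - 2) * b := by
  have hpow : ∀ a x : ℝ, 0 < x → HasDerivAt (fun x : ℝ => x ^ a) (a * x ^ (a - 1)) x :=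
    fun a x hx => hasDerivAt_rpow_const (Or.inl hx.ne')
  have hu : ∀ x, 0 < x → HasDerivAt (fun x => x ^ (-ν) * φ (x ^ (2 * ν)))
      (-ν * x ^ (-ν - 1) * φ (x ^ (2 * ν))
        + x ^ (-ν) * (φ' (x ^ (2 * ν)) * (2 * ν * x ^ (2 * ν - 1)))) x := fun x hx =>
    (hpow (-ν) x hx).mul ((hφ (x ^ (2 * ν)) (rpow_pos_of_pos hx _)).comp x (hpow (2 * ν) x hx))
  have hu' : HasDerivAt (fun x => -ν * x ^ (-ν - 1) * φ (x ^ (2 * ν))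
        + x ^ (-ν) * (φ' (x ^ (2 * ν)) * (2 * ν * x ^ (2 * ν - 1))))
      (-ν * ((-ν - 1) * r ^ (-ν - 1 - 1)) * φ (r ^ (2 * ν))
        + -ν * r ^ (-ν - 1) * (φ' (r ^ (2 * ν)) * (2 * ν * r ^ (2 * ν - 1)))
        + (-ν * r ^ (-ν - 1) * (φ' (r ^ (2 * ν)) * (2 * ν * r ^ (2 * ν - 1)))
          + r ^ (-ν) * (b * (2 * ν * r ^ (2 * ν - 1)) * (2 * ν * r ^ (2 * ν - 1))
            + φ' (r ^ (2 * ν)) * (2 * ν * ((2 * ν - 1) * r ^ (2 * ν - 1 - 1)))))) r := by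
    have h2ν := hpow (2 * ν) r hr
    exact (((hpow _ r hr).const_mul (-ν)).mul
        ((hφ (r ^ (2 * ν)) (rpow_pos_of_pos hr _)).comp r h2ν)).add
      ((hpow _ r hr).mul ((hφ'.comp r h2ν).mul ((hpow _ r hr).const_mul (2 * ν))))
  have hderiv : deriv (fun x => x ^ (-ν) * φ (x ^ (2 * ν))) =ᶠ[𝓝 r] _ :=
    eventually_of_mem (Ioi_mem_nhds hr) fun x hx => (hu x hx).deriv
  rw [besselLap, hderiv.deriv_eq, hu'.deriv, (hu r hr).deriv]
  generalize φ (r ^ (2 * ν)) = P, φ' (r ^ (2 * ν)) = P'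
  rw [show 3 * ν - 2 = ν + ν + ν - 1 - 1 by ring]
  have := rpow_pos_of_pos hr ν
  simp only [two_mul, rpow_sub hr, rpow_add hr, rpow_neg hr.le, rpow_one]
  field_simp
  ring

lemma abs_rpow_add_sub_rpow_add_le {a p s s' : ℝ} (ha : 0 < a) (hp0 : 0 ≤ p) (hp1 : p ≤ 1)
    (hs : 0 ≤ s) (hs' : 0 ≤ s') :
    |(s + a) ^ p - (s' + a) ^ p| ≤ p * a ^ (p - 1) * |s - s'| := by
  have hderiv : ∀ x ∈ Set.Ici (0 : ℝ),
      HasDerivWithinAt (fun x => (x + a) ^ p) (1 * p * (x + a) ^ (p - 1)) (Set.Ici 0) x :=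
    fun x hx => (((hasDerivAt_id x).add_const a).rpow_const
      (Or.inl (by simp only [Set.mem_Ici] at hx; positivity))).hasDerivWithinAt
  have hbound : ∀ x ∈ Set.Ici (0 : ℝ), ‖1 * p * (x + a) ^ (p - 1)‖ ≤ p * a ^ (p - 1) := by
    intro x hx
    simp only [Set.mem_Ici] at hx
    rw [one_mul, Real.norm_of_nonneg (by positivity)]
    exact mul_le_mul_of_nonneg_left (rpow_le_rpow_of_nonpos ha (by linarith) (by linarith)) hp0
  exact (convex_Ici 0).norm_image_sub_le_of_norm_hasDerivWithin_le hderiv hbound hs' hs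

lemma abs_deriv_superSol_time_le {ν γ μ R r t : ℝ} (hr : 0 < r) (hp0 : 0 ≤ ν / (2 * γ))
    (hp1 : ν / (2 * γ) ≤ 1) :
    |deriv (fun t' => superSol ν γ μ R r t') t|
      ≤ ν / (2 * γ) * (r ^ (2 * ν)) ^ (ν / (2 * γ) - 1) / r ^ ν := by
  rw [← Real.norm_eq_abs]
  refine norm_deriv_le_of_lip' (by positivity) (Eventually.of_forall fun t' => ?_)
  have hlip := abs_rpow_add_sub_rpow_add_le (rpow_pos_of_pos hr (2 * ν)) hp0 hp1
    (le_max_right (1 - t') 0) (le_max_right (1 - t) 0)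
  have hmax : |max (1 - t') 0 - max (1 - t) 0| ≤ |t' - t| := by
    simpa [abs_sub_comm] using abs_max_sub_max_le_abs (1 - t') (1 - t) 0
  simp only [superSol, Real.norm_eq_abs, add_sub_add_right_eq_sub, ← sub_div, abs_div,
    abs_of_pos (rpow_pos_of_pos hr ν)]
  calc _ ≤ ν / (2 * γ) * (r ^ (2 * ν)) ^ (ν / (2 * γ) - 1) * |t' - t| / r ^ ν := by
        gcongr
        exact hlip.trans (by gcongr)
    _ = _ := by ring

lemma superSol_time_lipschitz_const_le {ν γ μ r : ℝ} (hγ : 1 / 2 ≤ γ) (hν : 0 < ν) (hr0 : 0 < r)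
    (hr1 : r ≤ 1) (hμ : μ < ν ^ 2 / γ - 3 * ν + 2) :
    ν / (2 * γ) * (r ^ (2 * ν)) ^ (ν / (2 * γ) - 1) / r ^ ν ≤ ν * r ^ (μ - 2) := by
  have hγ0 : 0 < γ := by linarith
  have hexp : (r ^ (2 * ν)) ^ (ν / (2 * γ) - 1) / r ^ ν = r ^ (ν ^ 2 / γ - 3 * ν) := by
    rw [← rpow_mul hr0.le, ← rpow_sub hr0]
    congr 1
    field_simp
    ring
  rw [mul_div_assoc, hexp]
  exact mul_le_mul (div_le_self hν.le (by linarith))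
    (rpow_le_rpow_of_exponent_ge hr0 hr1 (by linarith)) (by positivity) hν.le

lemma superSol_eq_rpow_neg_mul {ν γ μ R x t : ℝ} (hν : ν ≠ 0) (hR : 0 ≤ R) (hx : 0 < x) :
    superSol ν γ μ R x t = x ^ (-ν) * ((max (1 - t) 0 + x ^ (2 * ν)) ^ (ν / (2 * γ)) + R ^ ν
      + (ν + 1) / (ν ^ 2 - μ ^ 2) * (x ^ (2 * ν)) ^ ((μ + ν) / (2 * ν))) := by
  rw [superSol, div_rpow hR hx.le, ← rpow_mul hx.le,
    show 2 * ν * ((μ + ν) / (2 * ν)) = μ + ν by field_simp, rpow_add hx, rpow_neg hx.le]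
  have := rpow_pos_of_pos hx ν
  field_simp

lemma besselLap_superSol {ν γ μ R r t : ℝ} (hν : ν ≠ 0) (hR : 0 ≤ R) (hr : 0 < r) :
    besselLap ν (fun x => superSol ν γ μ R x t) r
      = 4 * ν ^ 2 * (ν / (2 * γ)) * (ν / (2 * γ) - 1) * r ^ (3 * ν - 2)
          * (max (1 - t) 0 + r ^ (2 * ν)) ^ (ν / (2 * γ) - 2)
        + (ν + 1) / (ν ^ 2 - μ ^ 2) * (μ ^ 2 - ν ^ 2) * r ^ (μ - 2) := by
  set s := max (1 - t) 0
  set p := ν / (2 * γ)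
  set c := (ν + 1) / (ν ^ 2 - μ ^ 2)
  set q := (μ + ν) / (2 * ν)
  have hs : 0 ≤ s := le_max_right _ _
  have hφ : ∀ y, 0 < y → HasDerivAt (fun y => (s + y) ^ p + R ^ ν + c * y ^ q)
      (1 * p * (s + y) ^ (p - 1) + c * (q * y ^ (q - 1))) y := fun y hy =>
    ((((hasDerivAt_id' y).const_add s).rpow_const (Or.inl (by positivity))).add_const _).add
      ((hasDerivAt_rpow_const (Or.inl hy.ne')).const_mul c)
  have hY : 0 < r ^ (2 * ν) := rpow_pos_of_pos hr _
  have hφ' : HasDerivAt (fun y => 1 * p * (s + y) ^ (p - 1) + c * (q * y ^ (q - 1)))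
      (1 * p * (1 * (p - 1) * (s + r ^ (2 * ν)) ^ (p - 1 - 1))
        + c * (q * ((q - 1) * (r ^ (2 * ν)) ^ (q - 1 - 1)))) (r ^ (2 * ν)) :=
    ((((hasDerivAt_id' _).const_add s).rpow_const (Or.inl (by positivity))).const_mul _).add
      (((hasDerivAt_rpow_const (Or.inl hY.ne')).const_mul q).const_mul c)
  have hrepr : (fun x => superSol ν γ μ R x t)
      =ᶠ[𝓝 r] fun x => x ^ (-ν) * ((fun y => (s + y) ^ p + R ^ ν + c * y ^ q) (x ^ (2 * ν))) :=
    eventually_of_mem (Ioi_mem_nhds hr) fun x hx => superSol_eq_rpow_neg_mul hν hR hx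
  rw [besselLap_congr hrepr, besselLap_rpow_neg_mul_comp hr hφ hφ']
  have hq : 2 * ν * q = μ + ν := by simp only [q]; field_simp
  have hpow : r ^ (3 * ν - 2) * (r ^ (2 * ν)) ^ (q - 1 - 1) = r ^ (μ - 2) := by
    rw [← rpow_mul hr.le, ← rpow_add hr]
    congr 1
    linear_combination hq
  have hcoeff : 4 * ν ^ 2 * (q * (q - 1)) = μ ^ 2 - ν ^ 2 := by
    linear_combination (2 * ν * q + μ - ν) * hq
  rw [sub_sub, one_add_one_eq_two]
  linear_combination (4 * ν ^ 2 * c * q * (q - 1)) * hpow + c * r ^ (μ - 2) * hcoeff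

lemma besselLap_superSol_le {ν γ μ R r t : ℝ} (hμ0 : 0 < μ) (hμν : μ < ν) (hR : 0 ≤ R)
    (hr : 0 < r) (hp0 : 0 ≤ ν / (2 * γ)) (hp1 : ν / (2 * γ) ≤ 1) :
    besselLap ν (fun x => superSol ν γ μ R x t) r ≤ -(ν + 1) * r ^ (μ - 2) := by
  have hν : 0 < ν := hμ0.trans hμν
  have hcoeff : (ν + 1) / (ν ^ 2 - μ ^ 2) * (μ ^ 2 - ν ^ 2) = -(ν + 1) := by
    rw [← neg_sub, div_neg, neg_mul, div_mul_cancel₀ _ (by nlinarith : μ ^ 2 - ν ^ 2 < 0).ne]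
  have hconcave : 4 * ν ^ 2 * (ν / (2 * γ)) * (ν / (2 * γ) - 1) * r ^ (3 * ν - 2)
      * (max (1 - t) 0 + r ^ (2 * ν)) ^ (ν / (2 * γ) - 2) ≤ 0 := by
    refine mul_nonpos_of_nonpos_of_nonneg (mul_nonpos_of_nonpos_of_nonneg ?_ (by positivity))
      (by positivity)
    exact mul_nonpos_of_nonneg_of_nonpos (by positivity) (sub_nonpos.2 hp1)
  rw [besselLap_superSol hν.ne' hR hr, hcoeff]
  linarith

theorem stmt14_general (γ ν μ R T : ℝ) (hγ : 1 / 2 ≤ γ) (hν : ν ≤ 1)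
    (hμ0 : 0 < μ) (hμ : μ < min ν (ν ^ 2 / γ - 3 * ν + 2))
    (hR0 : 0 < R) :
    ∀ r t : ℝ, R ≤ r → r ≤ 1 → 0 ≤ t → t < T →
      1 - t ≤ r ^ (2 * γ) → r ^ (2 * γ) ≤ 1 →
      deriv (fun t' => superSol ν γ μ R r t') t -
          (deriv (deriv (fun r' => superSol ν γ μ R r' t)) r
            + r⁻¹ * deriv (fun r' => superSol ν γ μ R r' t) r
            - ν ^ 2 / r ^ 2 * superSol ν γ μ R r t) ≥
        r ^ (μ - 2) := by
  intro r t hRr hr1 _ _ _ _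
  obtain ⟨hμν, hμ2⟩ := lt_min_iff.mp hμ
  have hν0 : 0 < ν := hμ0.trans hμν
  have hr : 0 < r := hR0.trans_le hRr
  have hp0 : 0 ≤ ν / (2 * γ) := div_nonneg hν0.le (by linarith)
  have hp1 : ν / (2 * γ) ≤ 1 := (div_le_one (by linarith)).2 (by linarith)
  have htime : -(ν * r ^ (μ - 2)) ≤ deriv (fun t' => superSol ν γ μ R r t') t :=
    (neg_le_neg ((abs_deriv_superSol_time_le hr hp0 hp1).trans
      (superSol_time_lipschitz_const_le hγ hν0 hr hr1 hμ2))).trans (neg_abs_le _)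
  have hspace := besselLap_superSol_le (t := t) hμ0 hμν hR0.le hr hp0 hp1
  show _ - besselLap ν (fun r' => superSol ν γ μ R r' t) r ≥ _
  linarith

/-- Lemma 5.2, inequality (5.8): for `½ ≤ γ < ν ≤ 1` and
`0 < μ < min[ν, ν²/γ − 3ν + 2]`, on the region
`Ω_γ = {(r,t) ∈ [R,1]×[0,T) : 1−t ≤ r^{2γ} ≤ 1}` (with `0 < R < 1`, `T > 1`), the
function `v` satisfies `(∂_t − Δ_ν) v ≥ r^{μ−2}`, where
`Δ_ν = ∂_r² + r⁻¹ ∂_r − ν² r⁻²`. -/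
theorem stmt14 (γ ν μ R T : ℝ) (hγ : 1 / 2 ≤ γ) (hγν : γ < ν) (hν : ν ≤ 1)
    (hμ0 : 0 < μ) (hμ : μ < min ν (ν ^ 2 / γ - 3 * ν + 2))
    (hR0 : 0 < R) (hR1 : R < 1) (hT : 1 < T) :
    ∀ r t : ℝ, R ≤ r → r ≤ 1 → 0 ≤ t → t < T →
      1 - t ≤ r ^ (2 * γ) → r ^ (2 * γ) ≤ 1 →
      deriv (fun t' => superSol ν γ μ R r t') t -
          (deriv (deriv (fun r' => superSol ν γ μ R r' t)) r
            + r⁻¹ * deriv (fun r' => superSol ν γ μ R r' t) r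
            - ν ^ 2 / r ^ 2 * superSol ν γ μ R r t) ≥
        r ^ (μ - 2) :=
  stmt14_general γ ν μ R T hγ hν hμ0 hμ hR0
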